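/- arXiv:2212.10045 — 5 statements merged into one kernel-verified Lean document; each statement's English description precedes it below -/
import Mathlib

section
/- For positive integers m, a, n, b with m ≥ 1, n ≥ 1, a ≥ 1, b ≥ 1: √((m+n+a+b)² + 1) − √((m+a+1)² + 1) > √((n+b+1)² + 1) − √(5). -/
/-!
The function `h x = √(x ^ 2 + 1)` is strictly convex, its derivative being
`x / √(x ^ 2 + 1) = sin (arctan x)`. Hence its increments `h (x + c) - h x` over a fixed
step `c > 0` strictly increase with `x`. With `c = n + b - 1` the two sides of the inequality
are these increments at `x = 2` and at `x = m + a + 1 ≥ 3`.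
-/

open Real Set

theorem StrictConvexOn.map_add_sub_map_lt {𝕜 : Type*} [Field 𝕜] [LinearOrder 𝕜]
    [IsStrictOrderedRing 𝕜] {s : Set 𝕜} {f : 𝕜 → 𝕜} (hf : StrictConvexOn 𝕜 s f) {x y c : 𝕜}
    (hx : x ∈ s) (hy : y ∈ s) (hxc : x + c ∈ s) (hyc : y + c ∈ s) (hc : 0 < c) (hxy : x < y) :
    f (x + c) - f x < f (y + c) - f y := by
  -- Compare both secants with the secant over `[x, y + c]`.
  have left : (f (x + c) - f x) / (x + c - x) < (f (y + c) - f x) / (y + c - x) :=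
    hf.secant_strict_mono hx hxc hyc (by linarith) (by linarith) (by linarith)
  have right : (f x - f (y + c)) / (x - (y + c)) < (f y - f (y + c)) / (y - (y + c)) :=
    hf.secant_strict_mono hyc hx hy (by linarith) (by linarith) hxy
  have hlr : (f (y + c) - f x) / (y + c - x) = (f x - f (y + c)) / (x - (y + c)) := by
    rw [← neg_sub (f x), ← neg_sub x, neg_div_neg_eq]
  have slopes := left.trans (hlr ▸ right)
  rwa [add_sub_cancel_left, show y - (y + c) = -c by ring, div_neg, ← neg_div, neg_sub,
    div_lt_div_iff_of_pos_right hc] at slopes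

theorem strictMono_sin_arctan : StrictMono fun x => sin (arctan x) := fun _ _ hxy =>
  strictMonoOn_sin (Ioo_subset_Icc_self (arctan_mem_Ioo _))
    (Ioo_subset_Icc_self (arctan_mem_Ioo _)) (arctan_strictMono hxy)

theorem hasDerivAt_sqrt_sq_add_one (x : ℝ) :
    HasDerivAt (fun x => √(x ^ 2 + 1)) (sin (arctan x)) x := by
  have hpos : 0 < x ^ 2 + 1 := by positivity
  convert ((hasDerivAt_pow 2 x).add_const 1).sqrt hpos.ne' using 1
  rw [sin_arctan, add_comm 1]
  field_simp
  ring

theorem strictConvexOn_sqrt_sq_add_one : StrictConvexOn ℝ univ fun x => √(x ^ 2 + 1) := by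
  refine StrictMono.strictConvexOn_univ_of_deriv (by fun_prop) ?_
  rw [funext fun x => (hasDerivAt_sqrt_sq_add_one x).deriv]
  exact strictMono_sin_arctan

theorem case1_ineq (m a n b : ℕ) (hm : 1 ≤ m) (ha : 1 ≤ a) (hn : 1 ≤ n) (hb : 1 ≤ b) :
    Real.sqrt (((n : ℝ) + b + 1) ^ 2 + 1) - Real.sqrt 5 <
      Real.sqrt (((m : ℝ) + n + a + b) ^ 2 + 1) - Real.sqrt (((m : ℝ) + a + 1) ^ 2 + 1) := by
  have hma : (2 : ℝ) ≤ m + a := by exact_mod_cast add_le_add hm ha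
  have hnb : (2 : ℝ) ≤ n + b := by exact_mod_cast add_le_add hn hb
  have key := strictConvexOn_sqrt_sq_add_one.map_add_sub_map_lt (mem_univ 2)
    (mem_univ ((m : ℝ) + a + 1)) (mem_univ _) (mem_univ _) (c := (n : ℝ) + b - 1)
    (by linarith) (by linarith)
  rwa [show (2 : ℝ) + (n + b - 1) = n + b + 1 by ring, show (2 : ℝ) ^ 2 + 1 = 5 by norm_num,
    show (m : ℝ) + a + 1 + (n + b - 1) = m + n + a + b by ring] at key
end

section
/- For positive integers m, n, a, b with m, n ≥ 1 and a, b ≥ 1, and reals D_x ≥ 2, D_y ≥ 2 with D_y > D_x: √((m+n+a+b)² + D_y²) + √(4 + D_x²) + √5 + √((m+n+a+b)² + 1) + √((m+n+a+b)² + 4) > √((m+a+1)² + D_x²) + √((n+b+1)² + D_y²) + √((n+b+1)² + 1) + √((m+a+1)² + 1) + √((n+b+1)² + 4). -/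
/-!
Write `P = m + a + 1`, `Q = n + b + 1`, `S = m + n + a + b`, so that `P + Q = 2 + S` with
`2 < P` and `2 ≤ Q`. For a convex function `f`, moving two points apart with their sum fixed can
only increase `f x + f y`. Applied to the convex maps `x ↦ √(x² + 1)` and `x ↦ √(x² + 4)` this
trades the `Q`- and `P`-terms for `S`-terms and `√5`, `√8`; applied to the concave `√` it gives
`√(P² + Dx²) + √8 ≤ √(P² + 4) + √(4 + Dx²)`. Strictness comes from `Q < S`.
-/

open Set

section

variable {𝕜 : Type*} [Field 𝕜] [LinearOrder 𝕜] [IsStrictOrderedRing 𝕜] {s : Set 𝕜} {f : 𝕜 → 𝕜}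
  {x y r t : 𝕜}

theorem ConvexOn.map_add_map_le_of_add_eq (hf : ConvexOn 𝕜 s f) (hr : r ∈ s) (ht : t ∈ s)
    (hrx : r ≤ x) (hry : r ≤ y) (hsum : x + y = r + t) : f x + f y ≤ f r + f t := by
  rcases hrx.eq_or_lt with rfl | hrx
  · rw [show y = t by linarith]
  rcases hry.eq_or_lt with rfl | hry
  · rw [show x = t by linarith, add_comm]
  have hxt : x < t := by linarith
  have hyt : y < t := by linarith
  have hxs : x ∈ s := hf.1.ordConnected.out hr ht ⟨hrx.le, hxt.le⟩
  have hys : y ∈ s := hf.1.ordConnected.out hr ht ⟨hry.le, hyt.le⟩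
  -- slope on `[r, x]` ≤ slope on `[r, t]` ≤ slope on `[y, t]`, and `[r, x]`, `[y, t]` have equal length
  have hleft := hf.secant_mono hr hxs ht hrx.ne' (hrx.trans hxt).ne' hxt.le
  have hright := hf.secant_mono ht hr hys (hrx.trans hxt).ne hyt.ne hry.le
  rw [← neg_div_neg_eq (f r - f t), ← neg_div_neg_eq (f y - f t), neg_sub, neg_sub, neg_sub,
    neg_sub, show t - y = x - r by linarith] at hright
  have hslopes := hleft.trans hright
  rw [div_le_div_iff_of_pos_right (sub_pos.2 hrx)] at hslopes
  linarith

theorem ConcaveOn.map_add_map_le_of_add_eq (hf : ConcaveOn 𝕜 s f) (hr : r ∈ s) (ht : t ∈ s)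
    (hrx : r ≤ x) (hry : r ≤ y) (hsum : x + y = r + t) : f r + f t ≤ f x + f y := by
  have := hf.neg.map_add_map_le_of_add_eq hr ht hrx hry hsum
  simp only [Pi.neg_apply] at this
  linarith

end

theorem convexOn_sqrt_sq_add {c : ℝ} (hc : 0 ≤ c) : ConvexOn ℝ univ fun x : ℝ ↦ √(x ^ 2 + c) := by
  have hnorm : (fun x : ℝ ↦ √(x ^ 2 + c)) = fun x : ℝ ↦ ‖(x : ℂ) + √c * Complex.I‖ := by
    ext x
    rw [Complex.norm_add_mul_I, Real.sq_sqrt hc]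
  rw [hnorm]
  exact (convexOn_univ_norm.translate_left (√c * Complex.I)).comp_linearMap
    Complex.ofRealCLM.toLinearMap

theorem subcase12_ineq_general (m n a b : ℕ) (hm : 1 ≤ m) (hn : 1 ≤ n) (ha : 1 ≤ a)
    (Dx Dy : ℝ) (hDx : 2 ≤ Dx) :
    Real.sqrt (((m : ℝ) + a + 1) ^ 2 + Dx ^ 2) + Real.sqrt (((n : ℝ) + b + 1) ^ 2 + Dy ^ 2) +
        Real.sqrt (((n : ℝ) + b + 1) ^ 2 + 1) + Real.sqrt (((m : ℝ) + a + 1) ^ 2 + 1) +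
        Real.sqrt (((n : ℝ) + b + 1) ^ 2 + 4) <
      Real.sqrt (((m : ℝ) + n + a + b) ^ 2 + Dy ^ 2) + Real.sqrt (4 + Dx ^ 2) + Real.sqrt 5 +
        Real.sqrt (((m : ℝ) + n + a + b) ^ 2 + 1) +
        Real.sqrt (((m : ℝ) + n + a + b) ^ 2 + 4) := by
  set P : ℝ := m + a + 1
  set Q : ℝ := n + b + 1
  set S : ℝ := m + n + a + b
  have hm' : (1 : ℝ) ≤ m := by exact_mod_cast hm
  have hn' : (1 : ℝ) ≤ n := by exact_mod_cast hn
  have ha' : (1 : ℝ) ≤ a := by exact_mod_cast ha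
  have hP : 2 < P := by linarith
  have hQ : 2 ≤ Q := by linarith [Nat.cast_nonneg (α := ℝ) b]
  have hsum : P + Q = 2 + S := by ring
  have h1 := (convexOn_sqrt_sq_add zero_le_one).map_add_map_le_of_add_eq
    (mem_univ _) (mem_univ _) hP.le hQ hsum
  have h4 := (convexOn_sqrt_sq_add zero_le_four).map_add_map_le_of_add_eq
    (mem_univ _) (mem_univ _) hP.le hQ hsum
  have hDx' : √8 + √(P ^ 2 + Dx ^ 2) ≤ √(P ^ 2 + 4) + √(4 + Dx ^ 2) :=
    Real.strictConcaveOn_sqrt.concaveOn.map_add_map_le_of_add_eq (by norm_num)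
      (by positivity : (0 : ℝ) ≤ P ^ 2 + Dx ^ 2) (by nlinarith) (by nlinarith) (by ring)
  have hQS : √(Q ^ 2 + Dy ^ 2) < √(S ^ 2 + Dy ^ 2) :=
    Real.sqrt_lt_sqrt (by positivity) (by gcongr; linarith)
  norm_num at h1 h4
  linarith

theorem subcase12_ineq (m n a b : ℕ) (hm : 1 ≤ m) (hn : 1 ≤ n) (ha : 1 ≤ a) (hb : 1 ≤ b)
    (Dx Dy : ℝ) (hDx : 2 ≤ Dx) (hDy : 2 ≤ Dy) (hxy : Dx < Dy) :
    Real.sqrt (((m : ℝ) + a + 1) ^ 2 + Dx ^ 2) + Real.sqrt (((n : ℝ) + b + 1) ^ 2 + Dy ^ 2) +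
        Real.sqrt (((n : ℝ) + b + 1) ^ 2 + 1) + Real.sqrt (((m : ℝ) + a + 1) ^ 2 + 1) +
        Real.sqrt (((n : ℝ) + b + 1) ^ 2 + 4) <
      Real.sqrt (((m : ℝ) + n + a + b) ^ 2 + Dy ^ 2) + Real.sqrt (4 + Dx ^ 2) + Real.sqrt 5 +
        Real.sqrt (((m : ℝ) + n + a + b) ^ 2 + 1) +
        Real.sqrt (((m : ℝ) + n + a + b) ^ 2 + 4) :=
  subcase12_ineq_general m n a b hm hn ha Dx Dy hDx
end

section
/- For positive integers m, n, b with m, n ≥ 1, b ≥ 1 and a real D > 1: √(1 + D²) + √((m+n+b+1)² + 1) > √((m+1)² + D²) + √((n+b+1)² + 1). -/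
/-!
With `M = m` and `s = n + b + 1`, pass through the intermediate value `√2 + √((M + 1)² + 1)`.
Since `√` is strictly concave, its increment over an interval of length `(M + 1)² - 1` is
smaller on `[1 + D², (M + 1)² + D²]` than on `[2, (M + 1)² + 1]`, because `D² > 1`.
Since `x ↦ √(x² + 1)` is strictly convex, its increment over an interval of length `M` is
larger on `[s, s + M]` than on `[1, 1 + M]`, because `s > 1`. Adding the two comparisons gives
the claim.
-/

section

variable {𝕜 : Type*} [Field 𝕜] [LinearOrder 𝕜] [IsStrictOrderedRing 𝕜] {s : Set 𝕜} {f : 𝕜 → 𝕜}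

theorem StrictConvexOn.map_add_add_map_lt_map_add_map_add (hf : StrictConvexOn 𝕜 s f) {x y h : 𝕜}
    (hx : x ∈ s) (hyh : y + h ∈ s) (hxy : x < y) (hh : 0 < h) :
    f (x + h) + f y < f x + f (y + h) := by
  have hL : 0 < y + h - x := by linarith
  have ha : 0 < (y - x) / (y + h - x) := div_pos (by linarith) hL
  have hb : 0 < h / (y + h - x) := div_pos hh hL
  have hab : (y - x) / (y + h - x) + h / (y + h - x) = 1 := by field_simp; ring
  have hba : h / (y + h - x) + (y - x) / (y + h - x) = 1 := by rw [add_comm, hab]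
  have hne : x ≠ y + h := by linarith
  have h₁ := hf.2 hx hyh hne ha hb hab
  have h₂ := hf.2 hx hyh hne hb ha hba
  simp only [smul_eq_mul] at h₁ h₂
  rw [show (y - x) / (y + h - x) * x + h / (y + h - x) * (y + h) = x + h by field_simp; ring] at h₁
  rw [show h / (y + h - x) * x + (y - x) / (y + h - x) * (y + h) = y by field_simp; ring] at h₂
  linear_combination h₁ + h₂ + (f x + f (y + h)) * hab

theorem StrictConcaveOn.map_add_add_map_lt_map_add_map_add (hf : StrictConcaveOn 𝕜 s f) {x y h : 𝕜}
    (hx : x ∈ s) (hyh : y + h ∈ s) (hxy : x < y) (hh : 0 < h) :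
    f x + f (y + h) < f (x + h) + f y := by
  have := hf.neg.map_add_add_map_lt_map_add_map_add hx hyh hxy hh
  simp only [Pi.neg_apply] at this
  linarith

end

theorem strictConvexOn_sqrt_sq_add {c : ℝ} (hc : 0 < c) :
    StrictConvexOn ℝ Set.univ fun x : ℝ ↦ √(x ^ 2 + c) := by
  refine ⟨convex_univ, fun x _ y _ hxy a b ha hb hab ↦ ?_⟩
  simp only [smul_eq_mul]
  have hp := Real.sq_sqrt (show 0 ≤ x ^ 2 + c by positivity)
  have hq := Real.sq_sqrt (show 0 ≤ y ^ 2 + c by positivity)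
  -- `(x² + c)(y² + c) - (xy + c)² = c(x - y)²`
  have hprod : x * y + c < √(x ^ 2 + c) * √(y ^ 2 + c) := by
    rw [← Real.sqrt_mul (by positivity)]
    refine Real.lt_sqrt_of_sq_lt ?_
    nlinarith [mul_pos hc (pow_pos (abs_pos.2 (sub_ne_zero.2 hxy)) 2), sq_abs (x - y)]
  have hsq : (a * √(x ^ 2 + c) + b * √(y ^ 2 + c)) ^ 2 - ((a * x + b * y) ^ 2 + c) =
      2 * (a * b) * (√(x ^ 2 + c) * √(y ^ 2 + c) - (x * y + c)) := by
    linear_combination a ^ 2 * hp + b ^ 2 * hq + c * (a + b + 1) * hab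
  rw [Real.sqrt_lt' (by positivity)]
  linarith [mul_pos (mul_pos ha hb) (sub_pos.2 hprod)]

theorem sqrt_add_sqrt_lt {M s D : ℝ} (hM : 0 < M) (hs : 1 < s) (hD : 1 < D) :
    √((M + 1) ^ 2 + D ^ 2) + √(s ^ 2 + 1) < √(1 + D ^ 2) + √((M + s) ^ 2 + 1) := by
  have hA : √(1 + 1) + √((M + 1) ^ 2 + D ^ 2) < √((M + 1) ^ 2 + 1) + √(1 + D ^ 2) := by
    have h := Real.strictConcaveOn_sqrt.map_add_add_map_lt_map_add_map_add
      (x := 1 + 1) (y := 1 + D ^ 2) (h := (M + 1) ^ 2 - 1) (by norm_num)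
      (by rw [Set.mem_Ici]; nlinarith) (by nlinarith) (by nlinarith)
    rwa [show 1 + 1 + ((M + 1) ^ 2 - 1) = (M + 1) ^ 2 + 1 by ring,
      show 1 + D ^ 2 + ((M + 1) ^ 2 - 1) = (M + 1) ^ 2 + D ^ 2 by ring] at h
  have hB : √((1 + M) ^ 2 + 1) + √(s ^ 2 + 1) < √(1 ^ 2 + 1) + √((s + M) ^ 2 + 1) :=
    (strictConvexOn_sqrt_sq_add one_pos).map_add_add_map_lt_map_add_map_add
      trivial trivial hs hM
  rw [one_pow, add_comm 1 M, add_comm s M] at hB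
  linarith

theorem case2_ineq_general (m n b : ℕ) (hm : 1 ≤ m) (hb : 1 ≤ b) (D : ℝ) (hD : 1 < D) :
    Real.sqrt (((m : ℝ) + 1) ^ 2 + D ^ 2) + Real.sqrt (((n : ℝ) + b + 1) ^ 2 + 1) <
      Real.sqrt (1 + D ^ 2) + Real.sqrt (((m : ℝ) + n + b + 1) ^ 2 + 1) := by
  have hM : (0 : ℝ) < m := by exact_mod_cast hm
  have hs : (1 : ℝ) < n + b + 1 := by
    have : (1 : ℝ) ≤ b := by exact_mod_cast hb
    linarith [n.cast_nonneg (α := ℝ)]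
  simpa only [add_assoc] using sqrt_add_sqrt_lt hM hs hD

theorem case2_ineq (m n b : ℕ) (hm : 1 ≤ m) (hn : 1 ≤ n) (hb : 1 ≤ b) (D : ℝ) (hD : 1 < D) :
    Real.sqrt (((m : ℝ) + 1) ^ 2 + D ^ 2) + Real.sqrt (((n : ℝ) + b + 1) ^ 2 + 1) <
      Real.sqrt (1 + D ^ 2) + Real.sqrt (((m : ℝ) + n + b + 1) ^ 2 + 1) :=
  case2_ineq_general m n b hm hb D hD
end

section
/- For positive integers m, n with m, n ≥ 1 and a real D ≥ 2: √(1 + D²) + √((m+n+1)² + 4) > √((m+1)² + D²) + √((n+1)² + 4). -/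
/-!
Write `a, b, c, d` for the four square roots, so the claim is `a + b < c + d`. The radicands
satisfy `a² + b² + 2mn = c² + d²`, so it suffices that `ab < cd + mn`. Squaring once more, this
follows from `cd ≥ 2 (m + n + 1)` (as `c ≥ 2` and `d ≥ m + n + 1`) and a polynomial inequality in
which `D² ≥ 4` enters through the positive term `D² m (m + 2n + 2)`.
-/

theorem add_lt_add_of_sq_add_sq_eq {p q r s k : ℝ} (hrs : 0 ≤ r + s)
    (hsq : p ^ 2 + q ^ 2 + 2 * k = r ^ 2 + s ^ 2) (hmul : p * q < r * s + k) :
    p + q < r + s := by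
  have : (p + q) ^ 2 < (r + s) ^ 2 := by nlinarith
  exact (le_abs_self _).trans_lt (abs_lt_of_sq_lt_sq this hrs)

theorem two_mul_add_add_one_le_sqrt_mul_sqrt {M N E : ℝ} (hM : 0 ≤ M) (hN : 0 ≤ N)
    (hE : 4 ≤ E) :
    2 * (M + N + 1) ≤ √(1 + E) * √((M + N + 1) ^ 2 + 4) := by
  have hc : 2 ≤ √(1 + E) := (Real.le_sqrt' (by norm_num)).2 (by linarith)
  have hd : M + N + 1 ≤ √((M + N + 1) ^ 2 + 4) := (Real.le_sqrt' (by linarith)).2 (by linarith)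
  exact mul_le_mul hc hd (by linarith) (Real.sqrt_nonneg _)

theorem sqrt_mul_sqrt_lt_sqrt_mul_sqrt_add_mul {M N E : ℝ} (hM : 0 < M) (hN : 0 < N)
    (hE : 4 ≤ E) :
    √((M + 1) ^ 2 + E) * √((N + 1) ^ 2 + 4) < √(1 + E) * √((M + N + 1) ^ 2 + 4) + M * N := by
  set t := √(1 + E) * √((M + N + 1) ^ 2 + 4)
  have ht : 2 * (M + N + 1) ≤ t := two_mul_add_add_one_le_sqrt_mul_sqrt hM.le hN.le hE
  have ht_sq : t ^ 2 = (1 + E) * ((M + N + 1) ^ 2 + 4) := by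
    rw [mul_pow, Real.sq_sqrt (by linarith), Real.sq_sqrt (by positivity)]
  rw [← Real.sqrt_mul (by positivity), Real.sqrt_lt' (by nlinarith)]
  have hMN : 4 * M * N * (M + N + 1) ≤ 2 * M * N * t := by
    nlinarith [mul_pos hM hN]
  -- with `2MN·t` lowered by `hMN`, the gap is `2M²N + 2MN² + 2MN - 4M² - 8M + E·M(M + 2N + 2)`
  nlinarith [mul_nonneg (sub_nonneg.2 hE) (mul_nonneg hM.le (by linarith : 0 ≤ M + 2 * N + 2)),
    mul_pos hM hN, mul_pos (mul_pos hM hN) (add_pos hM hN)]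

theorem case3_ineq (m n : ℕ) (hm : 1 ≤ m) (hn : 1 ≤ n) (D : ℝ) (hD : 2 ≤ D) :
    Real.sqrt (((m : ℝ) + 1) ^ 2 + D ^ 2) + Real.sqrt (((n : ℝ) + 1) ^ 2 + 4) <
      Real.sqrt (1 + D ^ 2) + Real.sqrt (((m : ℝ) + n + 1) ^ 2 + 4) := by
  have hm' : (0 : ℝ) < m := by exact_mod_cast hm
  have hn' : (0 : ℝ) < n := by exact_mod_cast hn
  have hD2 : 4 ≤ D ^ 2 := by nlinarith
  refine add_lt_add_of_sq_add_sq_eq (k := m * n) (by positivity) ?_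
    (sqrt_mul_sqrt_lt_sqrt_mul_sqrt_add_mul hm' hn' hD2)
  rw [Real.sq_sqrt (by positivity), Real.sq_sqrt (by positivity), Real.sq_sqrt (by positivity),
    Real.sq_sqrt (by positivity)]
  ring
end

section
/- For a tree T in which every support vertex's pendant neighbors are counted: if I is a maximum independent set of T containing all pendant vertices and u, v are adjacent non-pendant vertices not in I whose other neighbors u₁,…,u_m, v₁,…,v_n are support vertices with only pendant further neighbors, then α(T) = Σᵢ (d(uᵢ) − 1) + Σⱼ (d(vⱼ) − 1) + (number of pendant neighbors of u and v) + α(H), where H is the remaining component. -/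
/-!
Let `C = {u, v} ∪ Su ∪ Sv` and let `K` be the set of pendant neighbours of `C`. Every vertex of
`Su ∪ Sv` has `d(w) - 1 ≥ 1` pendant neighbours, all of which lie in `I`, so `I` misses `C`;
hence every vertex of `I` outside `K` is non-adjacent to `C`, i.e. lies in `R`, and
`α(T) = |I| ≤ |K| + α(H)`. Conversely a pendant vertex of `K` has its only neighbour in `C`, so
`K` together with any independent set of `H` is independent, and `|K| + α(H) ≤ α(T)`. Finally
`|K|` counts the `d(w) - 1` pendant neighbours of each `w ∈ Su ∪ Sv` and those of `u` and `v`.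
-/

/-- A finset of vertices is independent: no two of its vertices are adjacent. -/
def SimpleGraph.IsIndepFinset {V : Type*} (G : SimpleGraph V) (s : Finset V) : Prop :=
  ∀ a ∈ s, ∀ b ∈ s, ¬ G.Adj a b

open Classical in
/-- The independence number of a graph on a finite vertex type. -/
noncomputable def SimpleGraph.indepNumFin {V : Type*} [Fintype V] (G : SimpleGraph V) : ℕ :=
  Nat.findGreatest (fun k => ∃ s : Finset V, G.IsIndepFinset s ∧ s.card = k) (Fintype.card V)

namespace SimpleGraph

variable {V : Type*} {G : SimpleGraph V}

theorem IsIndepFinset.mono {s t : Finset V} (ht : G.IsIndepFinset t) (hst : s ⊆ t) :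
    G.IsIndepFinset s :=
  fun a ha b hb => ht a (hst ha) b (hst hb)

theorem IsIndepFinset.card_le_indepNumFin [Fintype V] {s : Finset V} (hs : G.IsIndepFinset s) :
    s.card ≤ G.indepNumFin := by
  classical
  exact Nat.le_findGreatest (Finset.card_le_univ s) ⟨s, hs, rfl⟩

theorem exists_isIndepFinset_card_eq_indepNumFin [Fintype V] :
    ∃ s : Finset V, G.IsIndepFinset s ∧ s.card = G.indepNumFin := by
  classical
  exact Nat.findGreatest_spec (P := fun k => ∃ s : Finset V, G.IsIndepFinset s ∧ s.card = k)
    (Nat.zero_le _) ⟨∅, by simp [IsIndepFinset], rfl⟩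

variable {R : Set V} [Fintype R]

theorem IsIndepFinset.card_le_indepNumFin_induce {s : Finset V} (hs : G.IsIndepFinset s)
    (hsR : ∀ x ∈ s, x ∈ R) : s.card ≤ (G.induce R).indepNumFin := by
  classical
  have hcard : (s.subtype (· ∈ R)).card = s.card := by
    rw [Finset.card_subtype, Finset.filter_true_of_mem hsR]
  rw [← hcard]
  refine IsIndepFinset.card_le_indepNumFin fun a ha b hb => ?_
  exact hs a (Finset.mem_subtype.mp ha) b (Finset.mem_subtype.mp hb)

theorem IsIndepFinset.card_le_card_add_indepNumFin_induce [DecidableEq V] {s K : Finset V}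
    (hs : G.IsIndepFinset s) (hsKR : ∀ x ∈ s, x ∉ K → x ∈ R) :
    s.card ≤ K.card + (G.induce R).indepNumFin := calc
  s.card = (s ∩ K).card + (s \ K).card := (Finset.card_inter_add_card_sdiff s K).symm
  _ ≤ K.card + (G.induce R).indepNumFin := by
    gcongr
    · exact Finset.inter_subset_right
    · refine (hs.mono Finset.sdiff_subset).card_le_indepNumFin_induce fun x hx => ?_
      exact hsKR x (Finset.mem_sdiff.mp hx).1 (Finset.mem_sdiff.mp hx).2

theorem IsIndepFinset.card_add_indepNumFin_induce_le [Fintype V] [DecidableEq V] {K : Finset V}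
    (hK : G.IsIndepFinset K) (hKR : ∀ k ∈ K, k ∉ R) (hadj : ∀ k ∈ K, ∀ x ∈ R, ¬ G.Adj k x) :
    K.card + (G.induce R).indepNumFin ≤ G.indepNumFin := by
  obtain ⟨J, hJ, hJcard⟩ := (G.induce R).exists_isIndepFinset_card_eq_indepNumFin
  set J' := J.map (Function.Embedding.subtype (· ∈ R))
  have hJ'R : ∀ x ∈ J', x ∈ R := by
    simp only [J', Finset.mem_map, Function.Embedding.coe_subtype]
    rintro _ ⟨a, -, rfl⟩
    exact a.2
  have hJ' : G.IsIndepFinset J' := by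
    simp only [J', IsIndepFinset, Finset.mem_map, Function.Embedding.coe_subtype]
    rintro _ ⟨a, ha, rfl⟩ _ ⟨b, hb, rfl⟩
    exact hJ a ha b hb
  have hunion : G.IsIndepFinset (K ∪ J') := by
    intro a ha b hb hab
    rcases Finset.mem_union.mp ha with ha | ha <;> rcases Finset.mem_union.mp hb with hb | hb
    · exact hK a ha b hb hab
    · exact hadj a ha b (hJ'R b hb) hab
    · exact hadj b hb a (hJ'R a ha) hab.symm
    · exact hJ' a ha b hb hab
  have hdisj : Disjoint K J' :=
    Finset.disjoint_left.mpr fun k hk hk' => hKR k hk (hJ'R k hk')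
  calc K.card + (G.induce R).indepNumFin = (K ∪ J').card := by
        rw [Finset.card_union_of_disjoint hdisj, Finset.card_map, hJcard]
    _ ≤ G.indepNumFin := hunion.card_le_indepNumFin

section pendant

variable [Fintype V] [DecidableRel G.Adj]

def pendantNbrs (G : SimpleGraph V) [DecidableRel G.Adj] (w : V) : Finset V :=
  (G.neighborFinset w).filter (fun z => G.degree z = 1)

variable {u v w x z : V}

theorem mem_pendantNbrs : z ∈ G.pendantNbrs w ↔ G.Adj w z ∧ G.degree z = 1 := by
  simp [pendantNbrs]

theorem eq_of_mem_pendantNbrs {w' : V} (h : z ∈ G.pendantNbrs w) (h' : z ∈ G.pendantNbrs w') :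
    w = w' := by
  rw [mem_pendantNbrs] at h h'
  exact (degree_eq_one_iff_existsUnique_adj.mp h.2).unique h.1.symm h'.1.symm

theorem card_biUnion_pendantNbrs [DecidableEq V] (C : Finset V) :
    (C.biUnion G.pendantNbrs).card = ∑ w ∈ C, (G.pendantNbrs w).card :=
  Finset.card_biUnion fun _ _ _ _ hne =>
    Finset.disjoint_left.mpr fun _ h h' => hne (eq_of_mem_pendantNbrs h h')

theorem card_pendantNbrs_of_adj [DecidableEq V] (hwu : G.Adj w u) (hu : G.degree u ≠ 1)
    (hleaf : ∀ z, G.Adj w z → z ≠ u → G.degree z = 1) :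
    (G.pendantNbrs w).card = G.degree w - 1 := by
  have : G.pendantNbrs w = (G.neighborFinset w).erase u := by
    ext z
    simp only [mem_pendantNbrs, Finset.mem_erase, mem_neighborFinset]
    exact ⟨fun h => ⟨fun hzu => hu (hzu ▸ h.2), h.1⟩, fun h => ⟨h.2, hleaf z h.2 h.1⟩⟩
  rw [this, Finset.card_erase_of_mem (by simpa using hwu), card_neighborFinset_eq_degree]

theorem notMem_of_pendantNbrs_nonempty {I : Finset V} (hI : G.IsIndepFinset I)
    (hIpend : ∀ w, G.degree w = 1 → w ∈ I) (h : (G.pendantNbrs w).Nonempty) : w ∉ I := by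
  obtain ⟨z, hz⟩ := h
  rw [mem_pendantNbrs] at hz
  exact fun hw => hI w hw z (hIpend z hz.2) hz.1

theorem indepNumFin_eq_card_biUnion_pendantNbrs_add [DecidableEq V] {I C : Finset V}
    {R : Set V} [Fintype R] (hI : G.IsIndepFinset I) (hIcard : I.card = G.indepNumFin)
    (hIpend : ∀ w, G.degree w = 1 → w ∈ I) (hCI : ∀ w ∈ C, w ∉ I)
    (hC : ∀ w ∈ C, ∀ x, G.Adj w x → x ∈ C ∨ G.degree x = 1)
    (hR : ∀ x, x ∈ R ↔ x ∉ C ∧ ∀ w ∈ C, ¬ G.Adj w x) :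
    G.indepNumFin = (C.biUnion G.pendantNbrs).card + (G.induce R).indepNumFin := by
  set K := C.biUnion G.pendantNbrs
  have hK : ∀ k, k ∈ K ↔ ∃ w ∈ C, G.Adj w k ∧ G.degree k = 1 := by
    simp [K, mem_pendantNbrs]
  have hKI : K ⊆ I := fun k hk => by
    obtain ⟨-, -, -, hk⟩ := (hK k).mp hk
    exact hIpend k hk
  have hKR : ∀ k ∈ K, k ∉ R := fun k hk hkR => by
    obtain ⟨w, hw, hwk, -⟩ := (hK k).mp hk
    exact ((hR k).mp hkR).2 w hw hwk
  have hadj : ∀ k ∈ K, ∀ x ∈ R, ¬ G.Adj k x := fun k hk x hx hkx => by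
    obtain ⟨w, hw, hwk, hk1⟩ := (hK k).mp hk
    obtain rfl := (degree_eq_one_iff_existsUnique_adj.mp hk1).unique hkx hwk.symm
    exact ((hR x).mp hx).1 hw
  have hIR : ∀ x ∈ I, x ∉ K → x ∈ R := fun x hxI hxK => by
    refine (hR x).mpr ⟨fun hxC => hCI x hxC hxI, fun w hw hwx => ?_⟩
    rcases hC w hw x hwx with hxC | hx1
    · exact hCI x hxC hxI
    · exact hxK ((hK x).mpr ⟨w, hw, hwx, hx1⟩)
  exact le_antisymm (hIcard ▸ hI.card_le_card_add_indepNumFin_induce hIR)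
    ((hI.mono hKI).card_add_indepNumFin_induce_le hKR hadj)

section star

variable [DecidableEq V] {Su Pu : Finset V}

theorem mem_supportNbrs
    (hSu : Su = (G.neighborFinset u).filter (fun w => w ≠ v ∧ 2 ≤ G.degree w)) :
    w ∈ Su ↔ G.Adj u w ∧ w ≠ v ∧ 2 ≤ G.degree w := by
  simp [hSu]

theorem eq_or_mem_insert_or_degree_eq_one_of_adj
    (hSu : Su = (G.neighborFinset u).filter (fun w => w ≠ v ∧ 2 ≤ G.degree w))
    (hSuSupp : ∀ w ∈ Su, ∀ z, G.Adj w z → z ≠ u → G.degree z = 1)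
    (hw : w ∈ insert u Su) (hwx : G.Adj w x) : x = v ∨ x ∈ insert u Su ∨ G.degree x = 1 := by
  rcases Finset.mem_insert.mp hw with rfl | hw
  · have hx : 0 < G.degree x := G.degree_pos_iff_exists_adj x |>.mpr ⟨w, hwx.symm⟩
    by_cases hxv : x = v
    · exact .inl hxv
    by_cases hx2 : 2 ≤ G.degree x
    · exact .inr (.inl (Finset.mem_insert_of_mem ((mem_supportNbrs hSu).mpr ⟨hwx, hxv, hx2⟩)))
    · exact .inr (.inr (by omega))
  · by_cases hxu : x = u
    · exact .inr (.inl (hxu ▸ Finset.mem_insert_self u Su))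
    · exact .inr (.inr (hSuSupp w hw x hwx hxu))

theorem card_pendantNbrs_of_mem_supportNbrs
    (hSu : Su = (G.neighborFinset u).filter (fun w => w ≠ v ∧ 2 ≤ G.degree w))
    (hSuSupp : ∀ w ∈ Su, ∀ z, G.Adj w z → z ≠ u → G.degree z = 1)
    (hu : G.degree u ≠ 1) (hw : w ∈ Su) : (G.pendantNbrs w).card = G.degree w - 1 :=
  card_pendantNbrs_of_adj ((mem_supportNbrs hSu).mp hw).1.symm hu (hSuSupp w hw)

theorem sum_insert_card_pendantNbrs
    (hSu : Su = (G.neighborFinset u).filter (fun w => w ≠ v ∧ 2 ≤ G.degree w))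
    (hSuSupp : ∀ w ∈ Su, ∀ z, G.Adj w z → z ≠ u → G.degree z = 1)
    (hPu : Pu = G.pendantNbrs u) (hu : G.degree u ≠ 1) :
    ∑ w ∈ insert u Su, (G.pendantNbrs w).card = ∑ w ∈ Su, (G.degree w - 1) + Pu.card := by
  have huSu : u ∉ Su := fun h => G.loopless.irrefl u ((mem_supportNbrs hSu).mp h).1
  rw [Finset.sum_insert huSu, add_comm, hPu,
    Finset.sum_congr rfl fun w => card_pendantNbrs_of_mem_supportNbrs hSu hSuSupp hu]

theorem notMem_of_mem_insert_supportNbrs {I : Finset V} (hI : G.IsIndepFinset I)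
    (hIpend : ∀ w, G.degree w = 1 → w ∈ I) (huI : u ∉ I)
    (hSu : Su = (G.neighborFinset u).filter (fun w => w ≠ v ∧ 2 ≤ G.degree w))
    (hSuSupp : ∀ w ∈ Su, ∀ z, G.Adj w z → z ≠ u → G.degree z = 1)
    (hw : w ∈ insert u Su) : w ∉ I := by
  rcases Finset.mem_insert.mp hw with rfl | hw
  · exact huI
  refine notMem_of_pendantNbrs_nonempty hI hIpend (Finset.card_pos.mp ?_)
  rw [card_pendantNbrs_of_mem_supportNbrs hSu hSuSupp (fun h => huI (hIpend u h)) hw]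
  have hw2 := ((mem_supportNbrs hSu).mp hw).2.2
  omega

theorem disjoint_insert_supportNbrs {Sv : Finset V} (huv : G.Adj u v)
    (hSu : Su = (G.neighborFinset u).filter (fun w => w ≠ v ∧ 2 ≤ G.degree w))
    (hSv : Sv = (G.neighborFinset v).filter (fun w => w ≠ u ∧ 2 ≤ G.degree w))
    (hSuSupp : ∀ w ∈ Su, ∀ z, G.Adj w z → z ≠ u → G.degree z = 1) (hv : G.degree v ≠ 1) :
    Disjoint (insert u Su) (insert v Sv) := by
  refine Finset.disjoint_left.mpr fun w hwu hwv => ?_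
  rcases Finset.mem_insert.mp hwu with rfl | hwSu <;>
    rcases Finset.mem_insert.mp hwv with rfl | hwSv
  · exact huv.ne rfl
  · exact ((mem_supportNbrs hSv).mp hwSv).2.1 rfl
  · exact ((mem_supportNbrs hSu).mp hwSu).2.1 rfl
  · exact hv (hSuSupp w hwSu v ((mem_supportNbrs hSv).mp hwSv).1.symm huv.ne')

end star

end pendant

end SimpleGraph

open SimpleGraph in
theorem indepNum_counting_identity_general {V : Type*} [Fintype V] [DecidableEq V]
    (T : SimpleGraph V) [DecidableRel T.Adj]
    (I : Finset V) (hI : T.IsIndepFinset I) (hIcard : I.card = T.indepNumFin)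
    (hIpend : ∀ w : V, T.degree w = 1 → w ∈ I)
    (u v : V) (huv : T.Adj u v)
    (huI : u ∉ I) (hvI : v ∉ I)
    (Su Sv Pu Pv : Finset V)
    (hSu : Su = (T.neighborFinset u).filter (fun w => w ≠ v ∧ 2 ≤ T.degree w))
    (hSv : Sv = (T.neighborFinset v).filter (fun w => w ≠ u ∧ 2 ≤ T.degree w))
    (hPu : Pu = (T.neighborFinset u).filter (fun w => T.degree w = 1))
    (hPv : Pv = (T.neighborFinset v).filter (fun w => T.degree w = 1))
    (hSuSupp : ∀ w ∈ Su, ∀ z : V, T.Adj w z → z ≠ u → T.degree z = 1)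
    (hSvSupp : ∀ w ∈ Sv, ∀ z : V, T.Adj w z → z ≠ v → T.degree z = 1)
    (R : Set V)
    (hR : R = {x : V | x ≠ u ∧ x ≠ v ∧ ¬ T.Adj u x ∧ ¬ T.Adj v x ∧
      ∀ w ∈ Su ∪ Sv, ¬ T.Adj w x})
    [Fintype R] :
    T.indepNumFin =
      (∑ w ∈ Su, (T.degree w - 1)) + (∑ w ∈ Sv, (T.degree w - 1)) +
        (Pu.card + Pv.card) + (T.induce R).indepNumFin := by
  have hu : T.degree u ≠ 1 := fun h => huI (hIpend u h)
  have hv : T.degree v ≠ 1 := fun h => hvI (hIpend v h)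
  have hCI : ∀ w ∈ insert u Su ∪ insert v Sv, w ∉ I := fun w hw => by
    rcases Finset.mem_union.mp hw with hw | hw
    exacts [notMem_of_mem_insert_supportNbrs hI hIpend huI hSu hSuSupp hw,
      notMem_of_mem_insert_supportNbrs hI hIpend hvI hSv hSvSupp hw]
  have hC : ∀ w ∈ insert u Su ∪ insert v Sv, ∀ x, T.Adj w x →
      x ∈ insert u Su ∪ insert v Sv ∨ T.degree x = 1 := fun w hw x hwx => by
    rcases Finset.mem_union.mp hw with hw | hw
    · rcases eq_or_mem_insert_or_degree_eq_one_of_adj hSu hSuSupp hw hwx with rfl | hx | hx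
      exacts [.inl (Finset.mem_union_right _ (Finset.mem_insert_self _ _)),
        .inl (Finset.mem_union_left _ hx), .inr hx]
    · rcases eq_or_mem_insert_or_degree_eq_one_of_adj hSv hSvSupp hw hwx with rfl | hx | hx
      exacts [.inl (Finset.mem_union_left _ (Finset.mem_insert_self _ _)),
        .inl (Finset.mem_union_right _ hx), .inr hx]
  have hRC : ∀ x, x ∈ R ↔ x ∉ insert u Su ∪ insert v Sv ∧
      ∀ w ∈ insert u Su ∪ insert v Sv, ¬ T.Adj w x := fun x => by
    simp only [hR, Set.mem_ofPred_eq, Finset.mem_union, Finset.mem_insert, mem_supportNbrs hSu,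
      mem_supportNbrs hSv]
    grind
  rw [indepNumFin_eq_card_biUnion_pendantNbrs_add hI hIcard hIpend hCI hC hRC,
    card_biUnion_pendantNbrs, Finset.sum_union (disjoint_insert_supportNbrs huv hSu hSv hSuSupp hv),
    sum_insert_card_pendantNbrs hSu hSuSupp hPu hu, sum_insert_card_pendantNbrs hSv hSvSupp hPv hv]
  ring

/-- Counting identity for the independence number used in Case 1 of Lemma 3.2:
if `I` is a maximum independent set of a tree `T` containing all pendant vertices, and
`u, v` are adjacent non-pendant vertices not in `I` whose other non-pendant neighbors
(`Su` and `Sv`) are support vertices all of whose further neighbors are pendant, then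
`α(T) = Σ_{w ∈ Su} (d(w)-1) + Σ_{w ∈ Sv} (d(w)-1) + (#pendant neighbors of u and v) + α(H)`,
where `H` is the remaining component (the induced subgraph on the vertices not covered). -/
theorem indepNum_counting_identity {V : Type*} [Fintype V] [DecidableEq V]
    (T : SimpleGraph V) [DecidableRel T.Adj] (hT : T.IsTree)
    (I : Finset V) (hI : T.IsIndepFinset I) (hIcard : I.card = T.indepNumFin)
    (hIpend : ∀ w : V, T.degree w = 1 → w ∈ I)
    (u v : V) (huv : T.Adj u v) (hu : 2 ≤ T.degree u) (hv : 2 ≤ T.degree v)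
    (huI : u ∉ I) (hvI : v ∉ I)
    (Su Sv Pu Pv : Finset V)
    (hSu : Su = (T.neighborFinset u).filter (fun w => w ≠ v ∧ 2 ≤ T.degree w))
    (hSv : Sv = (T.neighborFinset v).filter (fun w => w ≠ u ∧ 2 ≤ T.degree w))
    (hPu : Pu = (T.neighborFinset u).filter (fun w => T.degree w = 1))
    (hPv : Pv = (T.neighborFinset v).filter (fun w => T.degree w = 1))
    (hSuSupp : ∀ w ∈ Su, ∀ z : V, T.Adj w z → z ≠ u → T.degree z = 1)
    (hSvSupp : ∀ w ∈ Sv, ∀ z : V, T.Adj w z → z ≠ v → T.degree z = 1)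
    (R : Set V)
    (hR : R = {x : V | x ≠ u ∧ x ≠ v ∧ ¬ T.Adj u x ∧ ¬ T.Adj v x ∧
      ∀ w ∈ Su ∪ Sv, ¬ T.Adj w x})
    [Fintype R] :
    T.indepNumFin =
      (∑ w ∈ Su, (T.degree w - 1)) + (∑ w ∈ Sv, (T.degree w - 1)) +
        (Pu.card + Pv.card) + (T.induce R).indepNumFin :=
  indepNum_counting_identity_general T I hI hIcard hIpend u v huv huI hvI Su Sv Pu Pv hSu hSv hPu
    hPv hSuSupp hSvSupp R hR
end
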